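/- arXiv:2202.05284 — 2 statements merged into one kernel-verified Lean document; each statement's English description precedes it below -/
import Mathlib

section
/- Let a = (a_0 < a_1 < ... < a_r) be a strictly increasing sequence of nonnegative integers with |a| := a_0 + a_1 + ... + a_r, and let ℓ(a) be the number of positive entries. Then the quantity deg B(g,a) := |a|! · 2^{|a|-ℓ(a)} · (∏_{i=0}^{r} 1/a_i!) · ∏_{0 ≤ j < i ≤ r} (a_i - a_j)/(a_i + a_j) is a nonnegative integer, where, if a_0 = 0, the formula is interpreted by omitting the i = 0 terms. -/
open Finset

section Aux
open Polynomial

variable {F : Type*} [Field F] {ι : Type*} [DecidableEq ι]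

lemma basis_coeff (s : Finset ι) (v : ι → F) (i : ι) (hi : i ∈ s) :
    (Lagrange.basis s v i).coeff (#s - 1) = ∏ j ∈ s.erase i, (v i - v j)⁻¹ := by
  unfold Lagrange.basis Lagrange.basisDivisor
  rw [prod_mul_distrib, ← map_prod, coeff_C_mul]
  have hcard : #(s.erase i) = #s - 1 := card_erase_of_mem hi
  have hmonic : (∏ j ∈ s.erase i, (X - C (v j))).Monic :=
    monic_prod_of_monic _ _ fun j _ => monic_X_sub_C _
  have hdeg : (∏ j ∈ s.erase i, (X - C (v j))).natDegree = #s - 1 := by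
    rw [natDegree_prod _ _ fun j _ => X_sub_C_ne_zero _]
    simp [hcard]
  rw [← hdeg, hmonic.coeff_natDegree, mul_one]

lemma lagrange_coeff (s : Finset ι) (v : ι → F) (hvs : Set.InjOn v s) (f : F[X])
    (hf : f.degree < #s) :
    ∑ i ∈ s, f.eval (v i) * ∏ j ∈ s.erase i, (v i - v j)⁻¹ = f.coeff (#s - 1) := by
  have h := congrArg (fun p : F[X] => p.coeff (#s - 1)) (Lagrange.eq_interpolate hvs hf)
  rw [h, Lagrange.interpolate_apply, finset_sum_coeff]
  exact (sum_congr rfl fun i hi => by rw [coeff_C_mul, basis_coeff s v i hi]).symm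

lemma star (S : Finset ℕ) (hS : ∀ z ∈ S, 1 ≤ z) :
    ∑ x ∈ S, (x : ℚ) * ∏ y ∈ S.erase x,
        (((x:ℚ) - 1 - y) * ((x:ℚ) + y)) / (((x:ℚ) - y) * ((x:ℚ) + y - 1))
      = ∑ x ∈ S, (x : ℚ) := by
  rcases S.eq_empty_or_nonempty with rfl | hne
  · simp
  set v : ℕ → ℚ := fun z => (z:ℚ)^2 - z with hv
  set Z : ℕ → ℚ := fun z => (z:ℚ)^2 + z with hZ
  have hinj : Set.InjOn v S := by
    intro a ha b hb hab
    have ha1 : (1:ℚ) ≤ (a:ℚ) := by exact_mod_cast hS a ha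
    have hb1 : (1:ℚ) ≤ (b:ℚ) := by exact_mod_cast hS b hb
    have : ((a:ℚ) - b) * ((a:ℚ) + b - 1) = 0 := by
      simp only [hv] at hab; nlinarith [hab]
    rcases mul_eq_zero.mp this with h | h
    · exact_mod_cast (by linarith : (a:ℚ) = b)
    · exfalso; nlinarith
  set P : Polynomial ℚ := (∏ y ∈ S, (Polynomial.X - Polynomial.C (Z y)))
      - ∏ y ∈ S, (Polynomial.X - Polynomial.C (v y)) with hP
  have hm1 : (∏ y ∈ S, (Polynomial.X - Polynomial.C (Z y))).Monic :=
    monic_prod_of_monic _ _ fun j _ => monic_X_sub_C _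
  have hm2 : (∏ y ∈ S, (Polynomial.X - Polynomial.C (v y))).Monic :=
    monic_prod_of_monic _ _ fun j _ => monic_X_sub_C _
  have hd1 : (∏ y ∈ S, (Polynomial.X - Polynomial.C (Z y))).natDegree = #S := by
    rw [natDegree_prod _ _ fun j _ => X_sub_C_ne_zero _]; simp
  have hd2 : (∏ y ∈ S, (Polynomial.X - Polynomial.C (v y))).natDegree = #S := by
    rw [natDegree_prod _ _ fun j _ => X_sub_C_ne_zero _]; simp
  have hdeg : P.degree < (#S : ℕ) := by
    apply lt_of_lt_of_le (Polynomial.degree_sub_lt ?_ hm1.ne_zero ?_)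
    · rw [Polynomial.degree_eq_natDegree hm1.ne_zero, hd1]
    · rw [Polynomial.degree_eq_natDegree hm1.ne_zero,
        Polynomial.degree_eq_natDegree hm2.ne_zero, hd1, hd2]
    · rw [hm1.leadingCoeff, hm2.leadingCoeff]
  have hcoeff : P.coeff (#S - 1) = -2 * ∑ y ∈ S, (y : ℚ) := by
    rw [hP, Polynomial.coeff_sub, prod_X_sub_C_coeff_card_pred S Z (card_pos.mpr hne),
      prod_X_sub_C_coeff_card_pred S v (card_pos.mpr hne)]
    simp only [hv, hZ]
    rw [mul_sum, neg_sub_neg, ← sum_sub_distrib]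
    exact sum_congr rfl fun x _ => by ring
  have hkey := lagrange_coeff S v hinj P hdeg
  rw [hcoeff] at hkey
  have heval : ∀ x ∈ S, P.eval (v x) = ∏ y ∈ S, (v x - Z y) := by
    intro x hx
    rw [hP, Polynomial.eval_sub, Polynomial.eval_prod, Polynomial.eval_prod]
    simp only [Polynomial.eval_sub, Polynomial.eval_X, Polynomial.eval_C]
    have hz : ∏ y ∈ S, (v x - v y) = 0 := prod_eq_zero hx (sub_self _)
    rw [hz, sub_zero]
  calc ∑ x ∈ S, (x : ℚ) * ∏ y ∈ S.erase x,
          (((x:ℚ) - 1 - y) * ((x:ℚ) + y)) / (((x:ℚ) - y) * ((x:ℚ) + y - 1))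
      = ∑ x ∈ S, (-1/2) * (P.eval (v x) * ∏ y ∈ S.erase x, (v x - v y)⁻¹) := by
        refine sum_congr rfl fun x hx => ?_
        rw [heval x hx, ← Finset.mul_prod_erase S _ hx]
        have hvz : v x - Z x = -2 * x := by simp only [hv, hZ]; ring
        rw [hvz]
        rw [prod_div_distrib, div_eq_mul_inv, ← prod_inv_distrib]
        have h1 : ∏ y ∈ S.erase x, (((x:ℚ) - 1 - y) * ((x:ℚ) + y))
            = ∏ y ∈ S.erase x, (v x - Z y) := by
          refine prod_congr rfl fun y _ => ?_; simp only [hv, hZ]; ring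
        have h2 : ∏ y ∈ S.erase x, ((((x:ℚ) - y) * ((x:ℚ) + y - 1))⁻¹)
            = ∏ y ∈ S.erase x, (v x - v y)⁻¹ := by
          refine prod_congr rfl fun y _ => ?_
          congr 1; simp only [hv]; ring
        rw [h1, h2]; ring
    _ = (-1/2) * ∑ x ∈ S, (P.eval (v x) * ∏ y ∈ S.erase x, (v x - v y)⁻¹) := by
        rw [mul_sum]
    _ = ∑ x ∈ S, (x : ℚ) := by rw [hkey]; ring

/-- pair weight -/
noncomputable def ww (a b : ℕ) : ℚ := if b < a then ((a:ℚ) - b) / ((a:ℚ) + b) else 1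

noncomputable def pp (S : Finset ℕ) : ℚ := ∏ x ∈ S, ∏ y ∈ S, ww x y

noncomputable def DD (S : Finset ℕ) : ℚ :=
  ((S.sum id).factorial : ℚ) * 2 ^ (S.sum id - #(S.filter (0 < ·)))
    * (∏ x ∈ S, ((x.factorial : ℚ))⁻¹) * pp S

lemma ww_self (a : ℕ) : ww a a = 1 := by simp [ww]

lemma pp_insert {c : ℕ} {S : Finset ℕ} (hc : c ∉ S) :
    pp (insert c S) = pp S * ∏ y ∈ S, (ww c y * ww y c) := by
  unfold pp
  rw [prod_insert hc, prod_insert hc, ww_self, one_mul]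
  have h : ∀ x ∈ S, ∏ y ∈ insert c S, ww x y = ww x c * ∏ y ∈ S, ww x y :=
    fun x _ => prod_insert hc
  rw [prod_congr rfl h, prod_mul_distrib, prod_mul_distrib]
  ring

lemma DD_empty : DD ∅ = 1 := by simp [DD, pp]

lemma ww_zero_left (y : ℕ) : ww 0 y = 1 := by simp [ww]

lemma ww_zero_right {y : ℕ} (hy : y ≠ 0) : ww y 0 = 1 := by
  have : (0:ℕ) < y := Nat.pos_of_ne_zero hy
  simp only [ww, if_pos this, Nat.cast_zero, sub_zero, add_zero]
  exact div_self (by exact_mod_cast hy)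

lemma DD_insert_zero {S : Finset ℕ} (h : 0 ∉ S) : DD (insert 0 S) = DD S := by
  unfold DD
  rw [sum_insert h, pp_insert h, prod_insert h]
  have h1 : (insert 0 S).filter (0 < ·) = S.filter (0 < ·) := by
    rw [filter_insert]; simp
  have h2 : ∏ y ∈ S, (ww 0 y * ww y 0) = 1 :=
    prod_eq_one fun y hy => by
      rw [ww_zero_left, ww_zero_right (fun hh => h (hh ▸ hy)), one_mul]
  rw [h1, h2]
  simp

lemma factor_eq {x y : ℕ} (hx : 1 ≤ x) (hy : 1 ≤ y) (hyx : y ≠ x) (hyx' : y ≠ x - 1) :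
    ww x y * ww y x * ((((x:ℚ) - 1 - y) * ((x:ℚ) + y)) / (((x:ℚ) - y) * ((x:ℚ) + y - 1)))
      = ww (x - 1) y * ww y (x - 1) := by
  have hxq : (1:ℚ) ≤ (x:ℚ) := by exact_mod_cast hx
  have hyq : (1:ℚ) ≤ (y:ℚ) := by exact_mod_cast hy
  have hcast : ((x - 1 : ℕ) : ℚ) = (x:ℚ) - 1 := by
    rw [Nat.cast_sub hx, Nat.cast_one]
  rcases Nat.lt_or_ge y x with h | h
  · -- y < x, and y ≠ x - 1 forces y < x - 1
    have h1 : y < x - 1 := by omega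
    have hx2 : 3 ≤ x := by omega
    have hxq2 : (3:ℚ) ≤ (x:ℚ) := by exact_mod_cast hx2
    have hyxq : (y:ℚ) < (x:ℚ) := by exact_mod_cast h
    rw [ww, ww, ww, ww, if_pos h, if_neg (by omega : ¬ x < y), if_pos h1,
      if_neg (by omega : ¬ x - 1 < y), hcast]
    have d1 : (x:ℚ) - y ≠ 0 := by intro hh; nlinarith
    have d2 : (x:ℚ) + y - 1 ≠ 0 := by nlinarith
    have d3 : (x:ℚ) + y ≠ 0 := by nlinarith
    have d4 : (x:ℚ) - 1 + y ≠ 0 := by nlinarith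
    field_simp
    ring
  · -- x < y
    have h2 : x < y := by omega
    have h3 : x - 1 < y := by omega
    have hyxq : (x:ℚ) < (y:ℚ) := by exact_mod_cast h2
    rw [ww, ww, ww, ww, if_neg (by omega : ¬ y < x), if_pos h2,
      if_neg (by omega : ¬ y < x - 1), if_pos h3, hcast]
    have d1 : (x:ℚ) - y ≠ 0 := by intro hh; nlinarith
    have d2 : (x:ℚ) + y - 1 ≠ 0 := by nlinarith
    have d3 : (x:ℚ) + y ≠ 0 := by nlinarith
    have d4 : (y:ℚ) + ((x:ℚ) - 1) ≠ 0 := by nlinarith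
    field_simp
    ring

lemma DD_key' {R : Finset ℕ} (hR : ∀ z ∈ R, 1 ≤ z) {x : ℕ} (hx1 : 1 ≤ x)
    (hxR : x ∉ R) (hx'R : x - 1 ∉ R) :
    (if x = 1 then (1:ℚ) else 2) * DD (insert (x - 1) R) * (((insert x R).sum id : ℕ) : ℚ)
      = DD (insert x R) * x
          * ∏ y ∈ R, ((((x:ℚ) - 1 - y) * ((x:ℚ) + y)) / (((x:ℚ) - y) * ((x:ℚ) + y - 1))) := by
  classical
  have hmk : #R ≤ R.sum id := by
    calc #R = ∑ _y ∈ R, 1 := by simp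
    _ ≤ ∑ y ∈ R, id y := sum_le_sum hR
  set m := R.sum id with hm
  set k := #R with hk
  have hsum1 : (insert x R).sum id = x + m := by rw [sum_insert hxR]; rfl
  have hsum2 : (insert (x - 1) R).sum id = (x - 1) + m := by rw [sum_insert hx'R]; rfl
  have hfiltR : R.filter (0 < ·) = R := filter_true_of_mem fun y hy => hR y hy
  have hfilt1 : #((insert x R).filter (0 < ·)) = k + 1 := by
    rw [filter_insert, if_pos (by omega : 0 < x), hfiltR, card_insert_of_notMem hxR]
  have hprod : (∏ y ∈ R, (ww x y * ww y x))
        * ∏ y ∈ R, ((((x:ℚ) - 1 - y) * ((x:ℚ) + y)) / (((x:ℚ) - y) * ((x:ℚ) + y - 1)))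
      = ∏ y ∈ R, (ww (x - 1) y * ww y (x - 1)) := by
    rw [← prod_mul_distrib]
    exact prod_congr rfl fun y hy =>
      factor_eq hx1 (hR y hy) (fun h => hxR (h ▸ hy)) (fun h => hx'R (h ▸ hy))
  have hfact1 : ((x + m).factorial : ℚ) = ((x:ℚ) + m) * (((x - 1) + m).factorial : ℚ) := by
    have h : x + m = ((x - 1) + m) + 1 := by omega
    rw [h, Nat.factorial_succ]
    push_cast [Nat.cast_sub hx1]
    ring
  have hfact2 : (x.factorial : ℚ) = (x:ℚ) * ((x - 1).factorial : ℚ) := by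
    have h : x = (x - 1) + 1 := by omega
    conv_lhs => rw [h, Nat.factorial_succ]
    push_cast [Nat.cast_sub hx1]
    ring
  have hfne : ((x - 1).factorial : ℚ) ≠ 0 := by
    exact_mod_cast (Nat.factorial_ne_zero _)
  unfold DD
  rw [hsum1, hsum2, pp_insert hxR, pp_insert hx'R, prod_insert hxR, prod_insert hx'R,
    hfilt1, hfact1, hfact2, ← hprod]
  rcases eq_or_lt_of_le hx1 with h1 | h2
  · -- x = 1
    have hx0 : x = 1 := h1.symm
    subst hx0
    have hfiltT : #((insert (1 - 1) R).filter (0 < ·)) = k := by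
      rw [filter_insert, if_neg (by omega), hfiltR]
    rw [hfiltT, if_pos rfl]
    have hexp : 1 + m - (k + 1) = (1 - 1) + m - k := by omega
    rw [hexp]
    push_cast
    ring
  · -- 2 ≤ x
    have hx2 : 2 ≤ x := h2
    have hfiltT : #((insert (x - 1) R).filter (0 < ·)) = k + 1 := by
      rw [filter_insert, if_pos (by omega : 0 < x - 1), hfiltR,
        card_insert_of_notMem hx'R]
    rw [hfiltT, if_neg (by omega : ¬ x = 1)]
    have hexp : x + m - (k + 1) = ((x - 1) + m - (k + 1)) + 1 := by omega
    rw [hexp, pow_succ]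
    have hxq : ((x:ℚ)) ≠ 0 := by positivity
    have hfprod : (∏ y ∈ R, ((y.factorial : ℚ))) ≠ 0 :=
      prod_ne_zero_iff.mpr fun y _ => by exact_mod_cast (Nat.factorial_ne_zero _)
    have hdprod : (∏ y ∈ R, (((x:ℚ) - y) * ((x:ℚ) + y - 1))) ≠ 0 :=
      prod_ne_zero_iff.mpr fun y hy => by
        have hy1 : 1 ≤ y := hR y hy
        have hyx : y ≠ x := fun h => hxR (h ▸ hy)
        have c1 : ((x:ℚ)) - y ≠ 0 := by
          rw [sub_ne_zero]
          exact_mod_cast (Ne.symm hyx)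
        have c2 : ((x:ℚ)) + y - 1 ≠ 0 := by
          have : (1:ℚ) ≤ (y:ℚ) := by exact_mod_cast hy1
          have : (2:ℚ) ≤ (x:ℚ) := by exact_mod_cast hx2
          nlinarith
        exact mul_ne_zero c1 c2
    push_cast
    field_simp [hxq, hfprod, hdprod]

lemma DD_rec {S : Finset ℕ} (hS : ∀ z ∈ S, 1 ≤ z) (hne : S.Nonempty) :
    DD S = ∑ x ∈ S.filter (fun x => x - 1 ∉ S),
      (if x = 1 then (1:ℚ) else 2) * DD (insert (x - 1) (S.erase x)) := by
  classical
  have hn1 : 1 ≤ S.sum id := by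
    obtain ⟨z, hz⟩ := hne
    calc 1 ≤ z := hS z hz
    _ ≤ S.sum id := single_le_sum (fun i _ => Nat.zero_le (id i)) hz
  have hn : ((S.sum id : ℕ) : ℚ) ≠ 0 := by
    have : (1:ℚ) ≤ ((S.sum id : ℕ) : ℚ) := by exact_mod_cast hn1
    linarith
  apply mul_right_cancel₀ hn
  have hterm : ∀ x ∈ S.filter (fun x => x - 1 ∉ S),
      (if x = 1 then (1:ℚ) else 2) * DD (insert (x - 1) (S.erase x)) * ((S.sum id : ℕ) : ℚ)
      = DD S * x * ∏ y ∈ S.erase x,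
          ((((x:ℚ) - 1 - y) * ((x:ℚ) + y)) / (((x:ℚ) - y) * ((x:ℚ) + y - 1))) := by
    intro x hx
    rw [mem_filter] at hx
    obtain ⟨hxS, hx'⟩ := hx
    have h := DD_key' (R := S.erase x) (fun z hz => hS z (mem_of_mem_erase hz))
      (hS x hxS) (notMem_erase x S) (fun h => hx' (mem_of_mem_erase h))
    rwa [insert_erase hxS] at h
  rw [sum_mul, sum_congr rfl hterm]
  have hzero : ∀ x ∈ S, x - 1 ∈ S →
      (∏ y ∈ S.erase x,
        ((((x:ℚ) - 1 - y) * ((x:ℚ) + y)) / (((x:ℚ) - y) * ((x:ℚ) + y - 1)))) = 0 := by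
    intro x hx hmem
    have hx1 : 1 ≤ x := hS x hx
    have hxne : x - 1 ≠ x := by
      have := hS (x-1) hmem; omega
    have hm : x - 1 ∈ S.erase x := mem_erase.mpr ⟨hxne, hmem⟩
    refine prod_eq_zero hm ?_
    rw [Nat.cast_sub hx1]
    push_cast
    rw [_root_.div_eq_zero_iff]
    left
    ring
  have hfull : ∑ x ∈ S.filter (fun x => x - 1 ∉ S), (DD S * x * ∏ y ∈ S.erase x,
        ((((x:ℚ) - 1 - y) * ((x:ℚ) + y)) / (((x:ℚ) - y) * ((x:ℚ) + y - 1))))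
      = ∑ x ∈ S, (DD S * x * ∏ y ∈ S.erase x,
        ((((x:ℚ) - 1 - y) * ((x:ℚ) + y)) / (((x:ℚ) - y) * ((x:ℚ) + y - 1)))) := by
    rw [sum_filter]
    refine sum_congr rfl fun x hx => ?_
    by_cases h : x - 1 ∉ S
    · rw [if_pos h]
    · rw [if_neg h, hzero x hx (not_not.mp h), mul_zero]
  rw [hfull]
  have hstar := star S hS
  symm
  calc ∑ x ∈ S, (DD S * x * ∏ y ∈ S.erase x,
        ((((x:ℚ) - 1 - y) * ((x:ℚ) + y)) / (((x:ℚ) - y) * ((x:ℚ) + y - 1))))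
      = DD S * ∑ x ∈ S, ((x:ℚ) * ∏ y ∈ S.erase x,
        ((((x:ℚ) - 1 - y) * ((x:ℚ) + y)) / (((x:ℚ) - y) * ((x:ℚ) + y - 1)))) := by
        rw [mul_sum]; exact sum_congr rfl fun x _ => by ring
    _ = DD S * ∑ x ∈ S, (x:ℚ) := by rw [hstar]
    _ = DD S * ((S.sum id : ℕ) : ℚ) := by
        congr 1
        rw [Nat.cast_sum]
        rfl

lemma DD_nat (n : ℕ) : ∀ S : Finset ℕ, S.sum id ≤ n → ∃ m : ℕ, DD S = m := by
  induction n with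
  | zero =>
    intro S hs
    have hsub : S ⊆ {0} := by
      intro z hz
      rw [mem_singleton]
      have h1 := single_le_sum (fun i (_ : i ∈ S) => Nat.zero_le (id i)) hz
      have h2 : ∑ x ∈ S, id x ≤ 0 := hs
      simp only [id_eq] at h1 h2
      omega
    rcases subset_singleton_iff.mp hsub with rfl | rfl
    · exact ⟨1, by rw [DD_empty]; norm_num⟩
    · refine ⟨1, ?_⟩
      rw [show ({0} : Finset ℕ) = insert 0 ∅ from rfl, DD_insert_zero (notMem_empty 0),
        DD_empty]
      norm_num
  | succ n ih =>
    intro S hs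
    set T := S.erase 0 with hT
    have hDD : DD S = DD T := by
      by_cases h0 : 0 ∈ S
      · conv_lhs => rw [← insert_erase h0]
        exact DD_insert_zero (notMem_erase 0 S)
      · rw [hT, erase_eq_of_notMem h0]
    have hsumT : T.sum id = S.sum id := by
      rw [hT]
      exact sum_erase _ rfl
    have hTpos : ∀ z ∈ T, 1 ≤ z := fun z hz =>
      Nat.pos_of_ne_zero (mem_erase.mp hz).1
    rcases T.eq_empty_or_nonempty with hemp | hne
    · exact ⟨1, by rw [hDD, hemp, DD_empty]; norm_num⟩
    · rw [hDD, DD_rec hTpos hne]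
      have hterm : ∀ x ∈ T.filter (fun x => x - 1 ∉ T), ∃ m : ℕ,
          DD (insert (x - 1) (T.erase x)) = m := by
        intro x hx
        rw [mem_filter] at hx
        apply ih
        have hx1 : 1 ≤ x := hTpos x hx.1
        have h1 : (insert (x - 1) (T.erase x)).sum id = (x - 1) + (T.erase x).sum id :=
          sum_insert (fun h => hx.2 (mem_of_mem_erase h))
        have h2 : x + (T.erase x).sum id = T.sum id := add_sum_erase T id hx.1
        omega
      choose g hg using hterm
      refine ⟨∑ x ∈ (T.filter (fun x => x - 1 ∉ T)).attach,
        (if x.1 = 1 then 1 else 2) * g x.1 x.2, ?_⟩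
      rw [← sum_attach (T.filter (fun x => x - 1 ∉ T))
        (fun x => (if x = 1 then (1:ℚ) else 2) * DD (insert (x - 1) (T.erase x)))]
      push_cast
      exact sum_congr rfl fun x _ => by rw [hg x.1 x.2]

lemma DD_int (S : Finset ℕ) : ∃ m : ℕ, DD S = m := DD_nat (S.sum id) S le_rfl

end Aux

/-- For a strictly increasing sequence `0 ≤ a 0 < a 1 < ... < a r` of
nonnegative integers, the quantity
`|a|! · 2^(|a|-ℓ(a)) · ∏ i 1/(a i)! · ∏_{j<i} (a i - a j)/(a i + a j)`
is a nonnegative integer.  (When `a j = 0` the pair factor is automatically `1`,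
and when `a i = 0` the factor `1/(a i)! = 1/0! = 1`, so the omission of the
`i = 0` terms when `a 0 = 0` is automatic.) -/
theorem degB_is_nonneg_integer (r : ℕ) (a : Fin (r + 1) → ℕ) (ha : StrictMono a) :
    ∃ n : ℕ,
      ((∑ i, a i).factorial : ℚ)
        * 2 ^ (∑ i, a i - (Finset.univ.filter fun i => 0 < a i).card)
        * (∏ i, ((a i).factorial : ℚ)⁻¹)
        * (∏ i, ∏ j, if j < i then ((a i : ℚ) - (a j : ℚ)) / ((a i : ℚ) + (a j : ℚ)) else 1)
      = (n : ℚ) := by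
  classical
  have hinj : ∀ x ∈ (Finset.univ : Finset (Fin (r+1))), ∀ y ∈ Finset.univ,
      a x = a y → x = y := fun x _ y _ h => ha.injective h
  set S : Finset ℕ := Finset.univ.image a with hS
  have hsum : S.sum id = ∑ i, a i := by rw [hS, sum_image hinj]; rfl
  have hcard : #(S.filter (0 < ·)) = #(Finset.univ.filter fun i => 0 < a i) := by
    rw [hS, filter_image, card_image_of_injective _ ha.injective]
  have hfact : ∏ x ∈ S, ((x.factorial : ℚ))⁻¹ = ∏ i, ((a i).factorial : ℚ)⁻¹ := by
    rw [hS, prod_image hinj]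
  have hpair : pp S
      = ∏ i, ∏ j, if j < i then ((a i : ℚ) - (a j : ℚ)) / ((a i : ℚ) + (a j : ℚ)) else 1 := by
    rw [pp, hS, prod_image hinj]
    refine prod_congr rfl fun i _ => ?_
    rw [prod_image hinj]
    refine prod_congr rfl fun j _ => ?_
    by_cases h : j < i
    · rw [ww, if_pos h, if_pos (ha.lt_iff_lt.mpr h)]
    · rw [ww, if_neg h, if_neg (fun hh => h (ha.lt_iff_lt.mp hh))]
  obtain ⟨n, hn⟩ := DD_int S
  refine ⟨n, ?_⟩
  rw [← hsum, ← hcard, ← hfact, ← hpair, ← hn]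
  rfl
end

section
/- For a strictly decreasing partition λ = (λ_1 > λ_2 > ... > λ_ℓ > 0), the number of standard shifted tableaux of shape λ equals |λ|! · ∏_{i=1}^{ℓ} 1/λ_i! · ∏_{1 ≤ i < j ≤ ℓ} (λ_i - λ_j)/(λ_i + λ_j), where |λ| = λ_1 + ... + λ_ℓ. -/
open Finset

/-- The shifted diagram of shape `lam` with `l` rows: row `i` (0-indexed) has
`lam i` boxes in columns `i, i+1, ..., i + lam i - 1` (each row is shifted one
step to the right with respect to the previous one). -/
def shiftedCells (l : ℕ) (lam : ℕ → ℕ) : Finset (ℕ × ℕ) :=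
  (Finset.range l ×ˢ Finset.range (l + (Finset.range l).sup lam)).filter
    (fun p => p.1 ≤ p.2 ∧ p.2 < p.1 + lam p.1)

/-- A standard shifted tableau of shape `lam` (with `l` rows): a bijective filling
of the shifted diagram by `1, ..., |lam|` (here modeled by `Fin |lam|`) with
entries strictly increasing from left to right along each row and strictly
increasing down each column. -/
def IsSST (l : ℕ) (lam : ℕ → ℕ)
    (T : ↥(shiftedCells l lam) → Fin (∑ i ∈ Finset.range l, lam i)) : Prop :=
  Function.Bijective T ∧
  (∀ c c' : ↥(shiftedCells l lam),
    (c : ℕ × ℕ).1 = (c' : ℕ × ℕ).1 → (c : ℕ × ℕ).2 < (c' : ℕ × ℕ).2 → T c < T c') ∧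
  (∀ c c' : ↥(shiftedCells l lam),
    (c : ℕ × ℕ).2 = (c' : ℕ × ℕ).2 → (c : ℕ × ℕ).1 < (c' : ℕ × ℕ).1 → T c < T c')

/-- The number of standard shifted tableaux of shape `lam` with `l` rows. -/
noncomputable def stdShiftedTableauCount (l : ℕ) (lam : ℕ → ℕ) : ℕ :=
  Nat.card {T : ↥(shiftedCells l lam) → Fin (∑ i ∈ Finset.range l, lam i) // IsSST l lam T}


/-! Removing the cell that holds the largest entry of a standard filling leaves a standard filling
of the diagram minus an outer corner, so the number `g λ` of standard shifted tableaux satisfies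
`g λ = ∑ g (λ - e_r)` over the rows `r` whose last box is removable. The right-hand side `F λ`
satisfies the same recursion: `|λ| F (λ - e_r) = λ_r F λ ∏_{j ≠ r} h (λ_r, λ_j)` with
`h (a, b) = (a - b - 1)(a + b) / ((a - b)(a + b - 1))`, which vanishes when `r` is not removable,
and `∑_r x_r ∏_{j ≠ r} h (x_r, x_j) = ∑_r x_r` is a Lagrange interpolation identity in the nodes
`x² - x`. Induction on `|λ|` finishes the proof. -/

def RowColLT (p q : ℕ × ℕ) : Prop :=
  (p.1 = q.1 ∧ p.2 < q.2) ∨ (p.2 = q.2 ∧ p.1 < q.1)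

instance : DecidableRel RowColLT := fun p q => by unfold RowColLT; infer_instance

lemma RowColLT.ne {p q : ℕ × ℕ} (h : RowColLT p q) : p ≠ q := by
  rintro rfl; rcases h with ⟨-, h⟩ | ⟨-, h⟩ <;> exact lt_irrefl _ h

def IsStdFilling (s : Finset (ℕ × ℕ)) {n : ℕ} (T : s → Fin n) : Prop :=
  Function.Bijective T ∧ ∀ c c' : s, RowColLT c c' → T c < T c'

noncomputable def stdFillingCount (s : Finset (ℕ × ℕ)) (n : ℕ) : ℕ :=
  Nat.card {T : s → Fin n // IsStdFilling s T}

def corners (s : Finset (ℕ × ℕ)) : Finset (ℕ × ℕ) :=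
  s.filter fun c => ∀ c' ∈ s, ¬ RowColLT c c'

lemma mem_corners {s : Finset (ℕ × ℕ)} {c : ℕ × ℕ} :
    c ∈ corners s ↔ c ∈ s ∧ ∀ c' ∈ s, ¬ RowColLT c c' :=
  mem_filter

lemma isSST_iff_isStdFilling {l : ℕ} {lam : ℕ → ℕ}
    {T : shiftedCells l lam → Fin (∑ i ∈ range l, lam i)} :
    IsSST l lam T ↔ IsStdFilling (shiftedCells l lam) T := by
  unfold IsSST IsStdFilling RowColLT
  refine ⟨fun ⟨hT, hrow, hcol⟩ => ⟨hT, fun c c' => ?_⟩,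
    fun ⟨hT, h⟩ => ⟨hT, fun c c' h₁ h₂ => h c c' (.inl ⟨h₁, h₂⟩),
      fun c c' h₁ h₂ => h c c' (.inr ⟨h₁, h₂⟩)⟩⟩
  rintro (⟨h₁, h₂⟩ | ⟨h₁, h₂⟩)
  exacts [hrow c c' h₁ h₂, hcol c c' h₁ h₂]

lemma stdShiftedTableauCount_eq_stdFillingCount (l : ℕ) (lam : ℕ → ℕ) :
    stdShiftedTableauCount l lam
      = stdFillingCount (shiftedCells l lam) (∑ i ∈ range l, lam i) :=
  Nat.card_congr (Equiv.subtypeEquivRight fun _ => isSST_iff_isStdFilling)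

lemma stdFillingCount_empty : stdFillingCount ∅ 0 = 1 := by
  rw [stdFillingCount, Nat.card_eq_one_iff_unique]
  have hempty : ∀ d : (∅ : Finset (ℕ × ℕ)), False := fun d => notMem_empty _ d.2
  exact ⟨⟨fun T T' => Subtype.ext (funext fun d => (hempty d).elim)⟩,
    ⟨⟨fun d => (hempty d).elim, ⟨fun d => (hempty d).elim, fun k => k.elim0⟩,
      fun d => (hempty d).elim⟩⟩⟩

section RemoveLargest

variable {s : Finset (ℕ × ℕ)} {n : ℕ} {c : ℕ × ℕ}

lemma IsStdFilling.mem_corners_of_eq_last {T : s → Fin (n + 1)} (hT : IsStdFilling s T) {d : s}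
    (hd : T d = Fin.last n) : (d : ℕ × ℕ) ∈ corners s :=
  mem_corners.2 ⟨d.2, fun c' hc' hlt => (hT.2 d ⟨c', hc'⟩ hlt).not_ge (hd ▸ Fin.le_last _)⟩

lemma IsStdFilling.apply_eq_last {T : s → Fin (n + 1)} (hT : IsStdFilling s T)
    (hlast : ∀ d, T d = Fin.last n → (d : ℕ × ℕ) = c) {d : s} (hd : (d : ℕ × ℕ) = c) :
    T d = Fin.last n := by
  obtain ⟨e, he⟩ := hT.1.2 (Fin.last n)
  rwa [Subtype.ext ((hlast e he).trans hd.symm)] at he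

def extendByLast (c : ℕ × ℕ) (T : s.erase c → Fin n) : s → Fin (n + 1) := fun d =>
  if h : (d : ℕ × ℕ) = c then Fin.last n else (T ⟨d, mem_erase.2 ⟨h, d.2⟩⟩).castSucc

def restrictOfLast (T : s → Fin (n + 1)) (hT : ∀ d, T d = Fin.last n → (d : ℕ × ℕ) = c) :
    s.erase c → Fin n :=
  fun d => (T ⟨d, mem_of_mem_erase d.2⟩).castPred fun h => (mem_erase.1 d.2).1 (hT _ h)

lemma extendByLast_eq_last {T : s.erase c → Fin n} {d : s}
    (hd : extendByLast c T d = Fin.last n) : (d : ℕ × ℕ) = c := by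
  by_contra h
  simp [extendByLast, h, Fin.castSucc_ne_last] at hd

lemma isStdFilling_extendByLast (hc : c ∈ corners s) {T : s.erase c → Fin n}
    (hT : IsStdFilling (s.erase c) T) : IsStdFilling s (extendByLast c T) := by
  obtain ⟨hcs, hcmax⟩ := mem_corners.1 hc
  refine ⟨⟨fun d e hde => ?_, fun k => ?_⟩, fun d e hde => ?_⟩
  · by_cases hd : (d : ℕ × ℕ) = c <;> by_cases he : (e : ℕ × ℕ) = c
    · exact Subtype.ext (hd.trans he.symm)
    all_goals simp [extendByLast, hd, he, Fin.castSucc_ne_last, (Fin.castSucc_ne_last _).symm]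
      at hde
    simpa using hT.1.1 hde
  · induction k using Fin.lastCases with
    | last => exact ⟨⟨c, hcs⟩, by simp [extendByLast]⟩
    | cast k =>
      obtain ⟨d, hd⟩ := hT.1.2 k
      have hdc := (mem_erase.1 d.2).1
      exact ⟨⟨d, mem_of_mem_erase d.2⟩, by simp [extendByLast, hdc, hd]⟩
  · by_cases he : (e : ℕ × ℕ) = c
    · have hd : (d : ℕ × ℕ) ≠ c := he ▸ hde.ne
      simp [extendByLast, hd, he, Fin.castSucc_lt_last]
    · have hd : (d : ℕ × ℕ) ≠ c := fun hd => hcmax e e.2 (hd ▸ hde)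
      simpa [extendByLast, hd, he] using
        hT.2 ⟨d, mem_erase.2 ⟨hd, d.2⟩⟩ ⟨e, mem_erase.2 ⟨he, e.2⟩⟩ hde

lemma isStdFilling_restrictOfLast {T : s → Fin (n + 1)} (hT : IsStdFilling s T)
    (hlast : ∀ d, T d = Fin.last n → (d : ℕ × ℕ) = c) :
    IsStdFilling (s.erase c) (restrictOfLast T hlast) := by
  refine ⟨⟨fun d e hde => ?_, fun k => ?_⟩, fun d e hde => ?_⟩
  · simpa using hT.1.1 (Fin.castPred_inj.1 hde)
  · obtain ⟨d, hd⟩ := hT.1.2 k.castSucc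
    have hdc : (d : ℕ × ℕ) ≠ c := fun h =>
      Fin.castSucc_ne_last k (hd.symm.trans (hT.apply_eq_last hlast h))
    exact ⟨⟨d, mem_erase.2 ⟨hdc, d.2⟩⟩, by simp [restrictOfLast, hd]⟩
  · exact Fin.castPred_lt_castPred_iff.2 (hT.2 _ _ hde)

def equivOfLast (hc : c ∈ corners s) :
    {T : s → Fin (n + 1) // IsStdFilling s T ∧ ∀ d, T d = Fin.last n → (d : ℕ × ℕ) = c} ≃
      {T : s.erase c → Fin n // IsStdFilling (s.erase c) T} where
  toFun T := ⟨restrictOfLast T.1 T.2.2, isStdFilling_restrictOfLast T.2.1 T.2.2⟩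
  invFun T := ⟨extendByLast c T.1, isStdFilling_extendByLast hc T.2,
    fun _ => extendByLast_eq_last⟩
  left_inv := by
    rintro ⟨T, hT, hlast⟩
    ext d : 2
    by_cases hd : (d : ℕ × ℕ) = c
    · simp [extendByLast, hd, hT.apply_eq_last hlast hd]
    · simp [extendByLast, restrictOfLast, hd]
  right_inv := by
    rintro ⟨T, hT⟩
    ext d : 2
    simp [extendByLast, restrictOfLast, (mem_erase.1 d.2).1]

end RemoveLargest

lemma Nat.card_subtype_eq_sum_card {α β : Type*} [Fintype α] (P : α → Prop) (t : Finset β)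
    (Q : β → α → Prop) (hQ : ∀ a, P a → ∃! b, b ∈ t ∧ Q b a) :
    Nat.card {a // P a} = ∑ b ∈ t, Nat.card {a // P a ∧ Q b a} := by
  classical
  simp only [Nat.card_eq_fintype_card, Fintype.card_subtype]
  rw [← card_biUnion]
  · congr 1
    ext a
    simp only [mem_filter, mem_univ, true_and, mem_biUnion]
    exact ⟨fun ha => (hQ a ha).exists.imp fun b hb => ⟨hb.1, ha, hb.2⟩,
      fun ⟨_, _, ha, _⟩ => ha⟩
  · intro b hb b' hb' hne
    simp only [Function.onFun, disjoint_left, mem_filter, mem_univ, true_and]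
    exact fun a ha ha' => hne ((hQ a ha.1).unique ⟨hb, ha.2⟩ ⟨hb', ha'.2⟩)

theorem stdFillingCount_succ (s : Finset (ℕ × ℕ)) (n : ℕ) :
    stdFillingCount s (n + 1) = ∑ c ∈ corners s, stdFillingCount (s.erase c) n := by
  rw [stdFillingCount, Nat.card_subtype_eq_sum_card _ _
    (fun c (T : s → Fin (n + 1)) => ∀ d, T d = Fin.last n → (d : ℕ × ℕ) = c)]
  · exact sum_congr rfl fun c hc => Nat.card_congr (equivOfLast hc)
  · intro T hT
    obtain ⟨d, hd⟩ := hT.1.2 (Fin.last n)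
    refine ⟨d, ⟨hT.mem_corners_of_eq_last hd, fun e he => ?_⟩, fun c ⟨_, hc⟩ => (hc d hd).symm⟩
    rw [hT.1.1 (he.trans hd.symm)]

lemma mem_shiftedCells {l : ℕ} {lam : ℕ → ℕ} {p : ℕ × ℕ} :
    p ∈ shiftedCells l lam ↔ p.1 < l ∧ p.1 ≤ p.2 ∧ p.2 < p.1 + lam p.1 := by
  simp only [shiftedCells, mem_filter, mem_product, mem_range, and_congr_left_iff,
    and_iff_left_iff_imp]
  intro h hl
  have := le_sup (f := lam) (mem_range.2 hl)
  omega

lemma shiftedCells_update_sub_one (l : ℕ) (lam : ℕ → ℕ) (r : ℕ) :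
    shiftedCells l (Function.update lam r (lam r - 1))
      = (shiftedCells l lam).erase (r, r + lam r - 1) := by
  ext ⟨a, b⟩
  rcases eq_or_ne a r with rfl | h
  · simp only [mem_shiftedCells, mem_erase, Function.update_self, ne_eq, Prod.mk.injEq, true_and]
    omega
  · simp [mem_shiftedCells, h, Function.update_of_ne]

lemma shiftedCells_succ_of_eq_zero {l : ℕ} {lam : ℕ → ℕ} (h : lam l = 0) :
    shiftedCells (l + 1) lam = shiftedCells l lam := by
  ext ⟨a, b⟩
  simp only [mem_shiftedCells]
  constructor
  · rintro ⟨ha, hab, hb⟩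
    rcases Nat.lt_succ_iff_lt_or_eq.1 ha with ha | rfl
    exacts [⟨ha, hab, hb⟩, by omega]
  · rintro ⟨ha, hab, hb⟩
    exact ⟨by omega, hab, hb⟩

lemma sum_range_update_sub_one {l r : ℕ} (hr : r < l) (lam : ℕ → ℕ) (hlam : 0 < lam r) :
    ∑ i ∈ range l, Function.update lam r (lam r - 1) i = ∑ i ∈ range l, lam i - 1 := by
  rw [sum_update_of_mem (mem_range.2 hr), sdiff_singleton_eq_erase,
    ← add_sum_erase (range l) lam (mem_range.2 hr)]
  omega

lemma stdShiftedTableauCount_zero (lam : ℕ → ℕ) : stdShiftedTableauCount 0 lam = 1 := by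
  have : shiftedCells 0 lam = ∅ := by simp [shiftedCells]
  rw [stdShiftedTableauCount_eq_stdFillingCount, sum_range_zero, this, stdFillingCount_empty]

lemma stdShiftedTableauCount_succ_of_eq_zero {l : ℕ} {lam : ℕ → ℕ} (h : lam l = 0) :
    stdShiftedTableauCount (l + 1) lam = stdShiftedTableauCount l lam := by
  simp only [stdShiftedTableauCount_eq_stdFillingCount, shiftedCells_succ_of_eq_zero h,
    sum_range_succ, h, add_zero]

lemma StrictAntiOn.add_apply_le_add_apply {l : ℕ} {lam : ℕ → ℕ}
    (h : StrictAntiOn lam (Set.Iio l)) {i j : ℕ} (hij : i ≤ j) (hj : j < l) :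
    j + lam j ≤ i + lam i := by
  induction j, hij using Nat.le_induction with
  | base => rfl
  | succ j hij ih =>
    have := h (show j < l by omega) hj (Nat.lt_succ_self j)
    have := ih (by omega)
    omega

def IsStrictPartition (l : ℕ) (lam : ℕ → ℕ) : Prop :=
  (∀ i < l, 0 < lam i) ∧ StrictAntiOn lam (Set.Iio l)

/-- The rows whose last box `(r, r + lam r - 1)` has no box below it. -/
def cornerRows (l : ℕ) (lam : ℕ → ℕ) : Finset ℕ :=
  (range l).filter fun r => r + 1 = l ∨ lam (r + 1) + 1 < lam r

lemma cornerRows_subset_range (l : ℕ) (lam : ℕ → ℕ) : cornerRows l lam ⊆ range l :=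
  filter_subset _ _

namespace IsStrictPartition

variable {l : ℕ} {lam : ℕ → ℕ}

lemma of_le {k : ℕ} {μ : ℕ → ℕ} (h : IsStrictPartition l lam) (hkl : k ≤ l)
    (hμ : Set.EqOn μ lam (Set.Iio k)) : IsStrictPartition k μ := by
  refine ⟨fun i hi => ?_, fun i hi j hj hij => ?_⟩
  · rw [hμ hi]; exact h.1 i (hi.trans_le hkl)
  · rw [hμ hi, hμ hj]
    exact h.2 (show i < l from hi.trans_le hkl) (show j < l from hj.trans_le hkl) hij

lemma update_of_mem_cornerRows (h : IsStrictPartition l lam) {r : ℕ}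
    (hr : r ∈ cornerRows l lam) (hne : ¬(r + 1 = l ∧ lam r = 1)) :
    IsStrictPartition l (Function.update lam r (lam r - 1)) := by
  obtain ⟨hrl, hcor⟩ := mem_filter.1 hr
  rw [mem_range] at hrl
  have hbelow : ∀ j, r < j → j < l → lam j + 1 < lam r := fun j hrj hj => by
    have := h.2.add_apply_le_add_apply (show r + 1 ≤ j by omega) hj
    omega
  refine ⟨fun i hi => ?_, fun i hi j hj hij => ?_⟩
  · rcases eq_or_ne i r with rfl | hir
    · have := h.1 i hi
      rw [Function.update_self]
      omega
    · rw [Function.update_of_ne hir]; exact h.1 i hi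
  · have := h.2 hi hj hij
    simp only [Set.mem_Iio] at hi hj
    rcases eq_or_ne i r with rfl | hir
    · rw [Function.update_self, Function.update_of_ne hij.ne']
      have := hbelow j hij hj
      omega
    · rw [Function.update_of_ne hir]
      rcases eq_or_ne j r with rfl | hjr
      · rw [Function.update_self]; omega
      · rw [Function.update_of_ne hjr]; exact this

lemma cast_pair_ne_zero {i j : ℕ} (h : IsStrictPartition l lam) (hi : i < l) (hj : j < l)
    (hij : i ≠ j) :
    (lam i : ℚ) - lam j ≠ 0 ∧ (lam i : ℚ) + lam j ≠ 0 ∧ (lam i : ℚ) + lam j - 1 ≠ 0 := by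
  have hne : lam i ≠ lam j := fun e => hij (h.2.injOn hi hj e)
  have h2 : (2 : ℚ) ≤ lam i + lam j := by
    have := h.1 i hi; have := h.1 j hj; exact_mod_cast (by omega : 2 ≤ lam i + lam j)
  exact ⟨sub_ne_zero.2 (Nat.cast_injective.ne hne), by positivity, by linarith⟩

lemma sum_pos (h : IsStrictPartition l lam) (hl : 0 < l) : 0 < ∑ i ∈ range l, lam i :=
  Finset.sum_pos (fun i hi => h.1 i (mem_range.1 hi)) (nonempty_range_iff.2 hl.ne')

end IsStrictPartition

lemma corners_shiftedCells {l : ℕ} {lam : ℕ → ℕ} (h : IsStrictPartition l lam) :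
    corners (shiftedCells l lam) = (cornerRows l lam).image fun r => (r, r + lam r - 1) := by
  obtain ⟨hpos, hanti⟩ := h
  ext ⟨a, b⟩
  simp only [mem_corners, cornerRows, mem_filter, mem_image, mem_range, mem_shiftedCells,
    RowColLT, Prod.forall, Prod.mk.injEq]
  constructor
  · rintro ⟨⟨ha, hab, hb⟩, hmax⟩
    have hb' : b = a + lam a - 1 := by
      by_contra hne
      exact hmax a (b + 1) ⟨ha, by omega, by omega⟩ (.inl ⟨rfl, by omega⟩)
    refine ⟨a, ⟨ha, ?_⟩, rfl, hb'.symm⟩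
    by_contra! hcor
    have hlt := hanti (show a < l from ha) (show a + 1 < l by omega) (Nat.lt_succ_self a)
    have := hpos (a + 1) (by omega)
    exact hmax (a + 1) b ⟨by omega, by omega, by omega⟩ (.inr ⟨rfl, by omega⟩)
  · rintro ⟨r, ⟨hr, hcor⟩, rfl, rfl⟩
    have := hpos r hr
    refine ⟨⟨hr, by omega, by omega⟩, fun a b ⟨ha, hab, hb⟩ => ?_⟩
    rintro (⟨rfl, _⟩ | ⟨rfl, hra⟩)
    · omega
    · have := hanti.add_apply_le_add_apply (show r + 1 ≤ a by omega) ha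
      omega

theorem stdShiftedTableauCount_eq_sum_cornerRows {l : ℕ} {lam : ℕ → ℕ} (hl : 0 < l)
    (h : IsStrictPartition l lam) :
    stdShiftedTableauCount l lam
      = ∑ r ∈ cornerRows l lam, stdShiftedTableauCount l (Function.update lam r (lam r - 1)) := by
  obtain ⟨m, hm⟩ := Nat.exists_eq_add_one.2 (h.sum_pos hl)
  rw [stdShiftedTableauCount_eq_stdFillingCount, hm, stdFillingCount_succ, corners_shiftedCells h,
    sum_image fun r _ r' _ hrr' => (Prod.mk.inj hrr').1]
  refine sum_congr rfl fun r hr => ?_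
  have hr := mem_range.1 (cornerRows_subset_range l lam hr)
  rw [stdShiftedTableauCount_eq_stdFillingCount, shiftedCells_update_sub_one,
    sum_range_update_sub_one hr _ (h.1 r hr), hm, Nat.add_sub_cancel]

section Identities

open Polynomial

variable {ι K : Type*} [Field K] [DecidableEq ι]

/-- Both sides are the coefficient of `X ^ (#s - 1)` in `∏ (X - z j) - ∏ (X - y j)`, computed
directly and by Lagrange interpolation at the nodes `y i`. -/
theorem sum_prod_sub_div_prod_erase_sub (s : Finset ι) (y z : ι → K) (hy : Set.InjOn y s) :
    ∑ i ∈ s, (∏ j ∈ s, (y i - z j)) / ∏ j ∈ s.erase i, (y i - y j)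
      = ∑ i ∈ s, y i - ∑ i ∈ s, z i := by
  rcases s.eq_empty_or_nonempty with rfl | hs
  · simp
  have hdeg : ∀ w : ι → K, (∏ j ∈ s, (X - C (w j))).degree = (#s : WithBot ℕ) := fun w => by
    rw [degree_eq_natDegree (monic_prod_X_sub_C _ _).ne_zero,
      natDegree_finsetProd_X_sub_C_eq_card]
  have hlt : (∏ j ∈ s, (X - C (z j)) - ∏ j ∈ s, (X - C (y j))).degree < (#s : WithBot ℕ) := by
    rw [← hdeg z]
    exact degree_sub_lt_left ((hdeg z).trans (hdeg y).symm)
      (monic_prod_X_sub_C _ _).ne_zero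
      ((monic_prod_X_sub_C _ _).leadingCoeff.trans (monic_prod_X_sub_C _ _).leadingCoeff.symm)
  have := Lagrange.coeff_eq_sum hy hlt
  rw [coeff_sub, prod_X_sub_C_coeff_card_pred _ _ hs.card_pos,
    prod_X_sub_C_coeff_card_pred _ _ hs.card_pos] at this
  convert this.symm using 1
  · refine sum_congr rfl fun i hi => ?_
    have hvanish : ∏ j ∈ s, (y i - y j) = 0 := prod_eq_zero hi (sub_self _)
    simp [eval_prod, hvanish]
  · ring

/-- The factor by which the pair `(r, j)` of `pairProduct` changes when `x r` drops by one. -/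
def hookRatio (a b : K) : K :=
  ((a - b - 1) * (a + b)) / ((a - b) * (a + b - 1))

/-- Apply the divided-difference identity to the nodes `y = x² - x` and the values `z = x² + x`:
`y r - z j = (x r - x j - 1) (x r + x j)`, `y r - y j = (x r - x j) (x r + x j - 1)` and
`y r - z r = -2 x r`. -/
theorem sum_mul_prod_hookRatio (s : Finset ι) (x : ι → K) (h2 : (2 : K) ≠ 0)
    (hx : Set.InjOn (fun i => x i ^ 2 - x i) s) :
    ∑ r ∈ s, x r * ∏ j ∈ s.erase r, hookRatio (x r) (x j) = ∑ r ∈ s, x r := by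
  have key : ∀ r ∈ s, (∏ j ∈ s, ((x r ^ 2 - x r) - (x j ^ 2 + x j)))
      / ∏ j ∈ s.erase r, ((x r ^ 2 - x r) - (x j ^ 2 - x j))
      = -2 * (x r * ∏ j ∈ s.erase r, hookRatio (x r) (x j)) := by
    intro r hr
    rw [← mul_prod_erase s _ hr, mul_div_assoc, ← prod_div_distrib, ← mul_assoc]
    congr 1
    · ring
    · exact prod_congr rfl fun j _ => by unfold hookRatio; ring
  have h := sum_prod_sub_div_prod_erase_sub s _ (fun i => x i ^ 2 + x i) hx
  rw [sum_congr rfl key, ← mul_sum, ← sum_sub_distrib] at h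
  refine mul_left_cancel₀ (neg_ne_zero.2 h2) (h.trans ?_)
  rw [mul_sum]
  exact sum_congr rfl fun r _ => by ring

lemma hookRatio_mul_left {a b : K} (h₁ : a - b ≠ 0) (h₂ : a + b ≠ 0) (h₃ : a + b - 1 ≠ 0) :
    (a - b) / (a + b) * hookRatio a b = (a - 1 - b) / (a - 1 + b) := by
  have : a - 1 + b ≠ 0 := by rwa [sub_add_eq_add_sub]
  unfold hookRatio
  field_simp
  ring

lemma hookRatio_mul_right {a b : K} (h₁ : a - b ≠ 0) (h₂ : a + b ≠ 0) (h₃ : a + b - 1 ≠ 0) :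
    (b - a) / (b + a) * hookRatio a b = (b - (a - 1)) / (b + (a - 1)) := by
  have : b - a ≠ 0 := sub_ne_zero.2 (sub_ne_zero.1 h₁).symm
  have : b + a ≠ 0 := by rwa [add_comm]
  have : b + (a - 1) ≠ 0 := by convert h₃ using 1; ring
  unfold hookRatio
  field_simp
  ring

end Identities

lemma Finset.prod_prod_eq_mul_prod_erase {ι M : Type*} [CommMonoid M] [DecidableEq ι]
    {s : Finset ι} {r : ι} (hr : r ∈ s) (f : ι → ι → M) :
    ∏ i ∈ s, ∏ j ∈ s, f i j
      = f r r * (∏ j ∈ s.erase r, f r j * f j r) * ∏ i ∈ s.erase r, ∏ j ∈ s.erase r, f i j := by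
  calc ∏ i ∈ s, ∏ j ∈ s, f i j = ∏ i ∈ s, (f i r * ∏ j ∈ s.erase r, f i j) :=
        prod_congr rfl fun i _ => (mul_prod_erase s _ hr).symm
    _ = (f r r * ∏ i ∈ s.erase r, f i r)
          * ((∏ j ∈ s.erase r, f r j) * ∏ i ∈ s.erase r, ∏ j ∈ s.erase r, f i j) := by
        rw [prod_mul_distrib, ← mul_prod_erase s (fun i => f i r) hr,
          ← mul_prod_erase s (fun i => ∏ j ∈ s.erase r, f i j) hr]
    _ = _ := by rw [prod_mul_distrib (f := fun j => f r j)]; ac_rfl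

section PairProduct

variable {K : Type*} [Field K]

def pairProduct (s : Finset ℕ) (x : ℕ → K) : K :=
  ∏ i ∈ s, ∏ j ∈ s, if i < j then (x i - x j) / (x i + x j) else 1

lemma pairProduct_update_sub_one {s : Finset ℕ} {r : ℕ} (hr : r ∈ s) (x : ℕ → K)
    (hx : ∀ j ∈ s.erase r, x r - x j ≠ 0 ∧ x r + x j ≠ 0 ∧ x r + x j - 1 ≠ 0) :
    pairProduct s (Function.update x r (x r - 1))
      = pairProduct s x * ∏ j ∈ s.erase r, hookRatio (x r) (x j) := by
  unfold pairProduct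
  rw [prod_prod_eq_mul_prod_erase hr, prod_prod_eq_mul_prod_erase hr]
  set y := Function.update x r (x r - 1)
  have hy : ∀ j ∈ s.erase r, y j = x j := fun j hj => Function.update_of_ne (ne_of_mem_erase hj) _ _
  have hyr : y r = x r - 1 := Function.update_self _ _ _
  have hoff : ∀ i ∈ s.erase r, (∏ j ∈ s.erase r, if i < j then (y i - y j) / (y i + y j) else 1)
      = ∏ j ∈ s.erase r, if i < j then (x i - x j) / (x i + x j) else 1 :=
    fun i hi => prod_congr rfl fun j hj => by rw [hy i hi, hy j hj]
  have hrow : ∀ j ∈ s.erase r,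
      ((if r < j then (y r - y j) / (y r + y j) else 1) *
        if j < r then (y j - y r) / (y j + y r) else 1)
      = ((if r < j then (x r - x j) / (x r + x j) else 1) *
        if j < r then (x j - x r) / (x j + x r) else 1) * hookRatio (x r) (x j) := by
    intro j hj
    obtain ⟨h₁, h₂, h₃⟩ := hx j hj
    rw [hy j hj, hyr]
    rcases (ne_of_mem_erase hj).lt_or_gt with hjr | hrj
    · simp only [hjr, hjr.not_gt, if_true, if_false, one_mul]
      exact (hookRatio_mul_right h₁ h₂ h₃).symm
    · simp only [hrj, hrj.not_gt, if_true, if_false, mul_one]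
      exact (hookRatio_mul_left h₁ h₂ h₃).symm
  rw [prod_congr rfl hoff, prod_congr rfl hrow, prod_mul_distrib]
  simp only [lt_irrefl, if_false]
  ring

lemma pairProduct_range_succ (l : ℕ) (x : ℕ → K) :
    pairProduct (range (l + 1)) x
      = pairProduct (range l) x * ∏ i ∈ range l, (x i - x l) / (x i + x l) := by
  unfold pairProduct
  rw [prod_range_succ, prod_eq_one fun j hj => if_neg (Nat.lt_succ_iff.1 (mem_range.1 hj)).not_gt,
    mul_one, ← prod_mul_distrib]
  exact prod_congr rfl fun i hi => by rw [prod_range_succ, if_pos (mem_range.1 hi)]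

end PairProduct

lemma prod_inv_factorial_update_sub_one {K : Type*} [Field K] [CharZero K] {s : Finset ℕ}
    {r : ℕ} (hr : r ∈ s) (μ : ℕ → ℕ) (hμ : 0 < μ r) :
    ∏ i ∈ s, ((Function.update μ r (μ r - 1) i).factorial : K)⁻¹
      = μ r * ∏ i ∈ s, ((μ i).factorial : K)⁻¹ := by
  rw [← mul_prod_erase s _ hr, ← mul_prod_erase s (fun i => ((μ i).factorial : K)⁻¹) hr,
    Function.update_self, ← mul_assoc]
  congr 1
  · rw [← Nat.mul_factorial_pred hμ.ne', Nat.cast_mul, mul_inv, ← mul_assoc,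
      mul_inv_cancel₀ (Nat.cast_ne_zero.2 hμ.ne'), one_mul]
  · exact prod_congr rfl fun i hi => by rw [Function.update_of_ne (ne_of_mem_erase hi)]

noncomputable def shiftedHookFormula (l : ℕ) (lam : ℕ → ℕ) : ℚ :=
  ((∑ i ∈ range l, lam i).factorial : ℚ) * (∏ i ∈ range l, ((lam i).factorial : ℚ)⁻¹)
    * pairProduct (range l) fun i => (lam i : ℚ)

section HookFormula

variable {l : ℕ} {lam : ℕ → ℕ}

lemma shiftedHookFormula_zero (lam : ℕ → ℕ) : shiftedHookFormula 0 lam = 1 := by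
  simp [shiftedHookFormula, pairProduct]

lemma shiftedHookFormula_succ_of_eq_zero (hpos : ∀ i < l, 0 < lam i) (h : lam l = 0) :
    shiftedHookFormula (l + 1) lam = shiftedHookFormula l lam := by
  have hone : ∀ i ∈ range l, (lam i : ℚ) / lam i = 1 := fun i hi =>
    div_self (Nat.cast_ne_zero.2 (hpos i (mem_range.1 hi)).ne')
  simp only [shiftedHookFormula, pairProduct_range_succ, sum_range_succ, prod_range_succ, h,
    Nat.cast_zero, sub_zero, add_zero, prod_congr rfl hone, prod_const_one, Nat.factorial_zero,
    Nat.cast_one, inv_one, mul_one]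

lemma shiftedHookFormula_update_sub_one (h : IsStrictPartition l lam) {r : ℕ} (hr : r < l) :
    (∑ i ∈ range l, lam i : ℚ) * shiftedHookFormula l (Function.update lam r (lam r - 1))
      = shiftedHookFormula l lam * lam r
        * ∏ j ∈ (range l).erase r, hookRatio (lam r : ℚ) (lam j) := by
  have hcast : (fun i => ((Function.update lam r (lam r - 1) i : ℕ) : ℚ))
      = Function.update (fun i => (lam i : ℚ)) r ((lam r : ℚ) - 1) := by
    funext i
    rcases eq_or_ne i r with rfl | hi
    · simp [Nat.cast_pred (h.1 i hr)]
    · simp [hi]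
  obtain ⟨m, hm⟩ := Nat.exists_eq_add_one.2 (h.sum_pos (Nat.zero_lt_of_lt hr))
  unfold shiftedHookFormula
  rw [hcast, pairProduct_update_sub_one (mem_range.2 hr) _ fun j hj =>
      h.cast_pair_ne_zero hr (mem_range.1 (mem_of_mem_erase hj)) (ne_of_mem_erase hj).symm,
    prod_inv_factorial_update_sub_one (mem_range.2 hr) _ (h.1 r hr),
    sum_range_update_sub_one hr _ (h.1 r hr), ← Nat.cast_sum, hm, Nat.add_sub_cancel,
    Nat.factorial_succ]
  push_cast
  ring

lemma shiftedHookFormula_update_sub_one_eq_zero (h : IsStrictPartition l lam) {r : ℕ}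
    (hr : r ∈ range l \ cornerRows l lam) :
    shiftedHookFormula l (Function.update lam r (lam r - 1)) = 0 := by
  obtain ⟨hrl, hcor⟩ := mem_sdiff.1 hr
  simp only [cornerRows, mem_filter, hrl, true_and, not_or] at hcor
  rw [mem_range] at hrl
  have hnext : r + 1 < l := by omega
  have := h.2 (show r < l from hrl) (show r + 1 < l from hnext) (Nat.lt_succ_self r)
  have hzero : hookRatio (lam r : ℚ) (lam (r + 1)) = 0 := by
    rw [hookRatio, show (lam r : ℚ) = lam (r + 1) + 1 by
      exact_mod_cast (by omega : lam r = lam (r + 1) + 1)]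
    simp
  have hsum : (∑ i ∈ range l, lam i : ℚ) ≠ 0 := by exact_mod_cast (h.sum_pos (by omega)).ne'
  have := shiftedHookFormula_update_sub_one h hrl
  rw [prod_eq_zero (mem_erase.2 ⟨by omega, mem_range.2 hnext⟩) hzero, mul_zero] at this
  exact (mul_eq_zero.1 this).resolve_left hsum

lemma sum_shiftedHookFormula_update_sub_one (hl : 0 < l) (h : IsStrictPartition l lam) :
    ∑ r ∈ range l, shiftedHookFormula l (Function.update lam r (lam r - 1))
      = shiftedHookFormula l lam := by
  have hsum : (∑ i ∈ range l, lam i : ℚ) ≠ 0 := by exact_mod_cast (h.sum_pos hl).ne'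
  have hinj : Set.InjOn (fun i => (lam i : ℚ) ^ 2 - lam i) (range l) := fun i hi j hj hij => by
    by_contra hne
    obtain ⟨h₁, -, h₃⟩ := h.cast_pair_ne_zero (mem_range.1 hi) (mem_range.1 hj) hne
    exact mul_ne_zero h₁ h₃ (by linear_combination hij)
  refine mul_left_cancel₀ hsum ?_
  rw [mul_sum, sum_congr rfl fun r hr => shiftedHookFormula_update_sub_one h (mem_range.1 hr)]
  simp_rw [mul_assoc, ← mul_sum]
  rw [sum_mul_prod_hookRatio _ _ two_ne_zero hinj, mul_comm]

end HookFormula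

theorem stdShiftedTableauCount_eq_shiftedHookFormula {l : ℕ} {lam : ℕ → ℕ}
    (h : IsStrictPartition l lam) :
    (stdShiftedTableauCount l lam : ℚ) = shiftedHookFormula l lam := by
  induction hn : ∑ i ∈ range l, lam i using Nat.strong_induction_on generalizing l lam with
  | _ n ih =>
  rcases l.eq_zero_or_pos with rfl | hl
  · simp [stdShiftedTableauCount_zero, shiftedHookFormula_zero]
  have hcorner : ∀ r ∈ cornerRows l lam,
      (stdShiftedTableauCount l (Function.update lam r (lam r - 1)) : ℚ)
        = shiftedHookFormula l (Function.update lam r (lam r - 1)) := by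
    intro r hr
    have hrl := mem_range.1 (cornerRows_subset_range l lam hr)
    have hsum := sum_range_update_sub_one hrl lam (h.1 r hrl)
    have hn1 : 0 < n := hn ▸ h.sum_pos hl
    by_cases hlast : r + 1 = l ∧ lam r = 1
    · obtain ⟨rfl, hr1⟩ := hlast
      have h0 : Function.update lam r (lam r - 1) r = 0 := by simp [hr1]
      rw [sum_range_succ, h0, add_zero] at hsum
      have h' := h.of_le (μ := Function.update lam r (lam r - 1)) r.le_succ fun i hi =>
        Function.update_of_ne (Set.mem_Iio.1 hi).ne _ _
      rw [stdShiftedTableauCount_succ_of_eq_zero h0, shiftedHookFormula_succ_of_eq_zero h'.1 h0]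
      exact ih _ (by omega) h' hsum
    · exact ih _ (by omega) (h.update_of_mem_cornerRows hr hlast) hsum
  rw [stdShiftedTableauCount_eq_sum_cornerRows hl h, Nat.cast_sum, sum_congr rfl hcorner,
    sum_subset (cornerRows_subset_range l lam) fun r hr hnot =>
      shiftedHookFormula_update_sub_one_eq_zero h (mem_sdiff.2 ⟨hr, hnot⟩),
    sum_shiftedHookFormula_update_sub_one hl h]

/-- For a strict partition `λ₁ > λ₂ > ... > λ_ℓ > 0`, the number of
standard shifted tableaux of shape `λ` equals
`|λ|! · ∏ i 1/λᵢ! · ∏_{i<j} (λᵢ - λⱼ)/(λᵢ + λⱼ)`. -/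
theorem stdShiftedTableau_hook_formula (l : ℕ) (lam : ℕ → ℕ)
    (hpos : ∀ i < l, 0 < lam i)
    (hdec : ∀ i j, i < j → j < l → lam j < lam i) :
    (stdShiftedTableauCount l lam : ℚ)
      = ((∑ i ∈ Finset.range l, lam i).factorial : ℚ)
        * (∏ i ∈ Finset.range l, ((lam i).factorial : ℚ)⁻¹)
        * (∏ i ∈ Finset.range l, ∏ j ∈ Finset.range l,
            if i < j then ((lam i : ℚ) - (lam j : ℚ)) / ((lam i : ℚ) + (lam j : ℚ)) else 1) :=
  stdShiftedTableauCount_eq_shiftedHookFormula ⟨hpos, fun i _ j hj hij => hdec i j hij hj⟩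
end
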